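/- The points 0 and 1 lie in J, and every x ∈ J with x ≠ 0 and x ≠ 1 belongs to exactly one of the disks A_n, A'_n, B_n, B'_n (n ≥ 1); consequently every point of J belongs to exactly one element of the alphabet 𝒜, so 𝒜 is a partition of J. -/

import Mathlib

open Function Set

/-- The cubic polynomial `f(x) = (9/4)·x·(x−1)²` acting on `ℚ₂`. -/
noncomputable def f : ℚ_[2] → ℚ_[2] := fun x => (9 / 4 : ℚ_[2]) * x * (x - 1) ^ 2

/-- `J = {x ∈ ℚ₂ : fⁿ(x) ∈ 4ℤ₂ ∪ (1+4ℤ₂) for all n ≥ 0}`, which the paper proves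
to be the Julia set of `f` in `ℚ₂`. -/
def J : Set ℚ_[2] :=
  {x | ∀ n : ℕ, f^[n] x ∈
    {y : ℚ_[2] | ‖y‖ ≤ (1 / 2 : ℝ) ^ 2} ∪ {y : ℚ_[2] | ‖y - 1‖ ≤ (1 / 2 : ℝ) ^ 2}}

/-- The disk `A_n = 2^{2n} + 2^{2n+3}ℤ₂`. -/
def A (n : ℕ) : Set ℚ_[2] :=
  {x | ‖x - 2 ^ (2 * n)‖ ≤ (1 / 2 : ℝ) ^ (2 * n + 3)}

/-- The disk `A'_n = 2^{2n} + 2^{2n+2} + 2^{2n+3}ℤ₂`. -/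
def A' (n : ℕ) : Set ℚ_[2] :=
  {x | ‖x - (2 ^ (2 * n) + 2 ^ (2 * n + 2))‖ ≤ (1 / 2 : ℝ) ^ (2 * n + 3)}

/-- The disk `B_n = 1 + 2^{n+1} + 2^{n+3}ℤ₂`. -/
def B (n : ℕ) : Set ℚ_[2] :=
  {x | ‖x - (1 + 2 ^ (n + 1))‖ ≤ (1 / 2 : ℝ) ^ (n + 3)}

/-- The disk `B'_n = 1 + 2^{n+1} + 2^{n+2} + 2^{n+3}ℤ₂`. -/
def B' (n : ℕ) : Set ℚ_[2] :=
  {x | ‖x - (1 + 2 ^ (n + 1) + 2 ^ (n + 2))‖ ≤ (1 / 2 : ℝ) ^ (n + 3)}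

/-- The alphabet `𝒜`: the collection consisting of `{0}`, `{1}`, and
`A_n ∩ J`, `A'_n ∩ J`, `B_n ∩ J`, `B'_n ∩ J` for all `n ≥ 1`. -/
def alphabet : Set (Set ℚ_[2]) :=
  {s | s = {0} ∨ s = {1} ∨
    ∃ n : ℕ, 1 ≤ n ∧ (s = A n ∩ J ∨ s = A' n ∩ J ∨ s = B n ∩ J ∨ s = B' n ∩ J)}

lemma norm_two : ‖(2:ℚ_[2])‖ = (1/2:ℝ) := by
  have := @Padic.norm_p 2 _
  push_cast at this ⊢
  rw [this]; norm_num

lemma norm_two_pow (k : ℕ) : ‖(2:ℚ_[2])^k‖ = (1/2:ℝ)^k := by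
  rw [norm_pow, norm_two]

lemma norm_nine : ‖(9:ℚ_[2])‖ = 1 := by
  have h1 : ‖((9:ℤ):ℚ_[2])‖ ≤ 1 := Padic.norm_int_le_one 9
  have h2 : ¬ ‖((9:ℤ):ℚ_[2])‖ < 1 := by
    rw [Padic.norm_intCast_lt_one_iff]; decide
  push_cast at h1 h2
  linarith [lt_or_eq_of_le h1]

lemma unit_sub_one {u : ℚ_[2]} (hu : ‖u‖ = 1) : ‖u - 1‖ ≤ (1/2:ℝ) := by
  set U : ℤ_[2] := ⟨u, hu.le⟩ with hUdef
  have key : ∀ V : ℤ_[2], PadicInt.toZMod V = 0 → (2:ℤ_[2]) ∣ V := by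
    intro V h
    have hV : V ∈ RingHom.ker (PadicInt.toZMod (p := 2)) := h
    rw [PadicInt.ker_toZMod, PadicInt.maximalIdeal_eq_span_p,
      Ideal.mem_span_singleton] at hV
    exact_mod_cast hV
  have hz : ∀ z : ZMod 2, z = 0 ∨ z = 1 := by decide
  rcases hz (PadicInt.toZMod U) with h | h
  · exfalso
    have := (PadicInt.norm_lt_one_iff_dvd U).2 (by exact_mod_cast key U h)
    rw [PadicInt.norm_def] at this
    simp only [hUdef] at this
    rw [hu] at this; exact lt_irrefl _ this
  · have h0 : PadicInt.toZMod (U - 1) = 0 := by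
      rw [map_sub, map_one, h, sub_self]
    obtain ⟨w, hw⟩ := key _ h0
    have : ‖U - 1‖ ≤ (1/2:ℝ) := by
      rw [hw, norm_mul]
      have h2 : ‖(2:ℤ_[2])‖ = (1/2:ℝ) := by
        rw [PadicInt.norm_def]; exact_mod_cast norm_two
      rw [h2]
      nlinarith [PadicInt.norm_le_one w, norm_nonneg w]
    calc ‖u - 1‖ = ‖((U - 1 : ℤ_[2]) : ℚ_[2])‖ := by push_cast; rfl
    _ = ‖U - 1‖ := (PadicInt.norm_def).symm
    _ ≤ _ := this

lemma exists_nat_val {x : ℚ_[2]} (hx : x ≠ 0) {k : ℕ} (h : ‖x‖ ≤ (1/2:ℝ)^k) :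
    ∃ m : ℕ, k ≤ m ∧ ‖x‖ = (1/2:ℝ)^m := by
  have hv := Padic.norm_eq_zpow_neg_valuation hx
  push_cast at hv
  have hhalf : ∀ j : ℤ, ((1/2:ℝ))^j = (2:ℝ)^(-j) := by
    intro j; rw [one_div, inv_zpow, ← zpow_neg]
  have hk2 : ‖x‖ ≤ (2:ℝ)^(-(k:ℤ)) := by
    rw [← hhalf]; exact_mod_cast h
  rw [hv] at hk2
  have hle : (k:ℤ) ≤ x.valuation := by
    have := (zpow_le_zpow_iff_right₀ (one_lt_two)).1 hk2
    omega
  refine ⟨x.valuation.toNat, by omega, ?_⟩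
  have : ((x.valuation.toNat : ℤ)) = x.valuation := Int.toNat_of_nonneg (by omega)
  rw [hv, ← hhalf, ← zpow_natCast (1/2:ℝ) x.valuation.toNat, this]

lemma half_lt {a b : ℕ} (h : a < b) : (1/2:ℝ)^b < (1/2)^a :=
  pow_lt_pow_right_of_lt_one₀ (by norm_num) (by norm_num) h

lemma half_le_iff {a b : ℕ} : (1/2:ℝ)^a ≤ (1/2)^b ↔ b ≤ a := by
  constructor
  · intro h; by_contra hb; push_neg at hb; exact absurd h (not_le.2 (half_lt hb))
  · intro h; rcases eq_or_lt_of_le h with rfl | h; · rfl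
    · exact (half_lt h).le

lemma half_inj {a b : ℕ} (h : (1/2:ℝ)^a = (1/2)^b) : a = b := by
  have h1 := half_le_iff.1 h.le
  have h2 := half_le_iff.1 h.ge
  omega

lemma halfpow_pos (a : ℕ) : (0:ℝ) < (1/2)^a := by positivity

lemma ultra (a b : ℚ_[2]) : ‖a + b‖ ≤ max ‖a‖ ‖b‖ := Padic.nonarchimedean a b

lemma ultra_sub (a b : ℚ_[2]) : ‖a - b‖ ≤ max ‖a‖ ‖b‖ := by
  simpa [sub_eq_add_neg] using Padic.nonarchimedean a (-b)

lemma norm_add_eq_left {a b : ℚ_[2]} (h : ‖b‖ < ‖a‖) : ‖a + b‖ = ‖a‖ := by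
  rw [Padic.add_eq_max_of_ne (ne_of_gt h), max_eq_left h.le]

lemma digit_split {x : ℚ_[2]} {k : ℕ} (h : ‖x‖ ≤ (1/2:ℝ)^k) :
    ‖x‖ ≤ (1/2:ℝ)^(k+1) ∨ ‖x - 2^k‖ ≤ (1/2:ℝ)^(k+1) := by
  by_cases hx : x = 0
  · left; rw [hx, norm_zero]; exact (halfpow_pos _).le
  rcases le_or_gt ‖x‖ ((1/2:ℝ)^(k+1)) with h1 | h1
  · exact Or.inl h1
  right
  obtain ⟨m, hkm, hm⟩ := exists_nat_val hx h
  have hmk : m = k := by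
    rw [hm] at h1
    have h2 : m ≤ k + 1 := half_le_iff.1 h1.le
    have h3 : m ≠ k + 1 := by rintro rfl; exact lt_irrefl _ h1
    omega
  subst hmk
  have h2k : ‖(2:ℚ_[2])^m‖ = (1/2:ℝ)^m := norm_two_pow m
  have h2ne : ((2:ℚ_[2])^m) ≠ 0 := pow_ne_zero _ (by norm_num)
  have hu : ‖x / 2^m‖ = 1 := by
    rw [norm_div, hm, h2k, div_self (ne_of_gt (halfpow_pos m))]
  have hb := unit_sub_one hu
  have heq : ‖x - 2^m‖ = (1/2:ℝ)^m * ‖x/2^m - 1‖ := by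
    rw [← h2k, ← norm_mul]
    congr 1
    field_simp
  rw [heq, pow_succ]
  exact mul_le_mul_of_nonneg_left hb (halfpow_pos m).le

lemma f_zero : f 0 = 0 := by simp [f]

lemma f_one : f 1 = 0 := by simp [f]

lemma zero_mem_J : (0:ℚ_[2]) ∈ J := by
  intro n
  left
  rw [Function.iterate_fixed f_zero]
  simp only [Set.mem_setOf_eq, norm_zero]
  positivity

lemma one_mem_J : (1:ℚ_[2]) ∈ J := by
  intro n
  cases n with
  | zero => right; simp only [Set.mem_setOf_eq, iterate_zero, id_eq, sub_self, norm_zero]; positivity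
  | succ k =>
    left
    rw [Function.iterate_succ_apply, f_one, Function.iterate_fixed f_zero]
    simp only [Set.mem_setOf_eq, norm_zero]
    positivity

lemma J_inv {x : ℚ_[2]} (hx : x ∈ J) : f x ∈ J := by
  intro n
  have := hx (n+1)
  rwa [Function.iterate_succ_apply] at this

lemma mem_J_self {x : ℚ_[2]} (hx : x ∈ J) :
    ‖x‖ ≤ (1/2:ℝ)^2 ∨ ‖x - 1‖ ≤ (1/2:ℝ)^2 := by
  have := hx 0
  simpa using this

lemma f_approx {x : ℚ_[2]} {m : ℕ} (hm : 2 ≤ m) (hx : ‖x‖ = (1/2:ℝ)^m) :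
    ‖f x - x/4‖ ≤ (1/2:ℝ)^(m+1) := by
  have h4 : ((4:ℚ_[2])) = 2^2 := by norm_num
  have hid : f x - x/4 = 2*x + (-((9/2)*x^2)) + (9/4)*x^3 := by
    unfold f; field_simp; ring
  have n2 : ‖(2:ℚ_[2])*x‖ = (1/2:ℝ)^(m+1) := by
    rw [norm_mul, norm_two, hx, pow_succ]; ring
  have n92 : ‖(9/2:ℚ_[2])*x^2‖ ≤ (1/2:ℝ)^(m+1) := by
    rw [norm_mul, norm_div, norm_nine, norm_two, norm_pow, hx, ← pow_mul]
    have : (1:ℝ) / (1/2) * ((1/2:ℝ))^(m*2)  = 2 * (1/2)^(m*2) := by ring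
    rw [this]
    have h1 : (1/2:ℝ)^(m*2) = (1/2)^(m*2-1) * (1/2) := by
      rw [← pow_succ]; congr 1; omega
    rw [h1]
    have hle := half_le_iff.2 (show m+1 ≤ m*2-1 by omega)
    linarith
  have n94 : ‖(9/4:ℚ_[2])*x^3‖ ≤ (1/2:ℝ)^(m+1) := by
    rw [norm_mul, norm_div, norm_nine, h4, norm_two_pow, norm_pow, hx, ← pow_mul]
    have : (1:ℝ) / ((1/2)^2) * ((1/2:ℝ))^(m*3) = 4 * (1/2)^(m*3) := by norm_num
    rw [this]
    have h1 : (1/2:ℝ)^(m*3) = (1/2)^(m*3-2) * (1/4) := by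
      rw [show (1/4:ℝ) = (1/2)^2 by norm_num, ← pow_add]; congr 1; omega
    rw [h1]
    have hle := half_le_iff.2 (show m+1 ≤ m*3-2 by omega)
    linarith
  rw [hid]
  refine le_trans (ultra _ _) (max_le (le_trans (ultra _ _) (max_le n2.le ?_)) n94)
  rw [norm_neg]; exact n92

lemma four_eq : (4:ℚ_[2]) = 2^2 := by norm_num

lemma norm_quarter {x : ℚ_[2]} {m : ℕ} (hm : 2 ≤ m) (hx : ‖x‖ = (1/2:ℝ)^m) :
    ‖x/4‖ = (1/2:ℝ)^(m-2) := by
  rw [norm_div, four_eq, norm_two_pow, hx,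
    show m = (m-2)+2 by omega, pow_add]
  field_simp
  ring_nf
  congr 1
  omega

lemma f_norm {x : ℚ_[2]} {m : ℕ} (hm : 2 ≤ m) (hx : ‖x‖ = (1/2:ℝ)^m) :
    ‖f x‖ = (1/2:ℝ)^(m-2) := by
  have hq := f_approx hm hx
  have h4 : ‖x/4‖ = (1/2:ℝ)^(m-2) := norm_quarter hm hx
  have hsplit : f x = x/4 + (f x - x/4) := by ring
  rw [hsplit, norm_add_eq_left, h4]
  rw [h4]
  exact lt_of_le_of_lt hq (half_lt (by omega))

lemma A_struct : ∀ m : ℕ, ∀ x : ℚ_[2], x ∈ J → ‖x‖ = (1/2:ℝ)^m → 2 ≤ m →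
    ∃ n, 1 ≤ n ∧ m = 2*n ∧ ‖x - 2^(2*n)‖ ≤ (1/2:ℝ)^(2*n+2) := by
  intro m
  induction m using Nat.strong_induction_on with
  | _ m ih =>
    intro x hx hnorm hm
    have hy : f x ∈ J := J_inv hx
    have hq := f_approx hm hnorm
    have hfn : ‖f x‖ = (1/2:ℝ)^(m-2) := f_norm hm hnorm
    rcases lt_or_ge m 4 with h4 | h4
    · interval_cases m
      · have h1 : ‖f x‖ = 1 := by rw [hfn]; norm_num
        rcases mem_J_self hy with h | h
        · rw [h1] at h; norm_num at h
        · refine ⟨1, le_refl 1, by norm_num, ?_⟩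
          have key : ‖x/4 - 1‖ ≤ (1/2:ℝ)^2 := by
            have hs : x/4 - 1 = (x/4 - f x) + (f x - 1) := by ring
            rw [hs]
            refine le_trans (ultra _ _) (max_le ?_ h)
            rw [← norm_neg]
            simp only [neg_sub]
            exact le_trans hq (half_le_iff.2 (by omega))
          have hs2 : x - 2^(2*1) = 4*(x/4 - 1) := by
            field_simp
            norm_num
          rw [hs2, norm_mul, four_eq, norm_two_pow]
          calc (1/2:ℝ)^2 * ‖x/4 - 1‖ ≤ (1/2)^2 * (1/2)^2 :=
                mul_le_mul_of_nonneg_left key (halfpow_pos 2).le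
            _ = (1/2)^(2*1+2) := by norm_num
      · exfalso
        have h1 : ‖f x‖ = (1/2:ℝ) := by rw [hfn]; norm_num
        rcases mem_J_self hy with h | h
        · rw [h1] at h; norm_num at h
        · have h2 : ‖f x‖ = 1 := by
            have hs : f x = 1 + (f x - 1) := by ring
            rw [hs, norm_add_eq_left, norm_one]
            rw [norm_one]
            exact lt_of_le_of_lt h (by norm_num)
          rw [h1] at h2; norm_num at h2
    · obtain ⟨n', hn', hmn', hc⟩ := ih (m-2) (by omega) (f x) hy hfn (by omega)
      refine ⟨n'+1, by omega, by omega, ?_⟩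
      have key : ‖x/4 - 2^(2*n')‖ ≤ (1/2:ℝ)^m := by
        have hs : x/4 - 2^(2*n') = (x/4 - f x) + (f x - 2^(2*n')) := by ring
        rw [hs]
        refine le_trans (ultra _ _) (max_le ?_ ?_)
        · rw [← norm_neg]
          simp only [neg_sub]
          exact le_trans hq (half_le_iff.2 (by omega))
        · exact le_trans hc (half_le_iff.2 (by omega))
      have hx4 : x - 2^(2*(n'+1)) = 4*(x/4 - 2^(2*n')) := by
        have h2 : (2:ℚ_[2])^(2*(n'+1)) = 4 * 2^(2*n') := by
          rw [show 2*(n'+1) = 2*n' + 2 by ring, pow_add]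
          ring
        rw [h2]
        field_simp
      rw [hx4, norm_mul, four_eq, norm_two_pow]
      calc (1/2:ℝ)^2 * ‖x/4 - 2^(2*n')‖ ≤ (1/2)^2 * (1/2)^m :=
            mul_le_mul_of_nonneg_left key (halfpow_pos 2).le
        _ = (1/2:ℝ)^(2*(n'+1)+2) := by
            rw [← pow_add]
            congr 1
            omega

lemma memA_or_A' {x : ℚ_[2]} (hx : x ∈ J) (h0 : x ≠ 0) (h : ‖x‖ ≤ (1/2:ℝ)^2) :
    ∃ n, 1 ≤ n ∧ (x ∈ A n ∨ x ∈ A' n) := by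
  obtain ⟨m, hm2, hm⟩ := exists_nat_val h0 h
  obtain ⟨n, hn1, hmn, hc⟩ := A_struct m x hx hm hm2
  refine ⟨n, hn1, ?_⟩
  rcases digit_split hc with h1 | h1
  · left
    show ‖x - 2^(2*n)‖ ≤ (1/2:ℝ)^(2*n+3)
    rwa [show 2*n+2+1 = 2*n+3 by omega] at h1
  · right
    show ‖x - (2^(2*n) + 2^(2*n+2))‖ ≤ (1/2:ℝ)^(2*n+3)
    have he : x - (2^(2*n) + 2^(2*n+2)) = (x - 2^(2*n)) - 2^(2*n+2) := by ring
    rw [he]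
    rwa [show 2*n+2+1 = 2*n+3 by omega] at h1

lemma memB_or_B' {x : ℚ_[2]} (h1x : x ≠ 1) (h : ‖x - 1‖ ≤ (1/2:ℝ)^2) :
    ∃ n, 1 ≤ n ∧ (x ∈ B n ∨ x ∈ B' n) := by
  have hz : x - 1 ≠ 0 := sub_ne_zero.2 h1x
  obtain ⟨m, hm2, hm⟩ := exists_nat_val hz h
  rcases digit_split hm.le with h1 | h1
  · exfalso
    rw [hm] at h1
    have := half_le_iff.1 h1
    omega
  rcases digit_split h1 with h2 | h2
  · refine ⟨m-1, by omega, Or.inl ?_⟩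
    show ‖x - (1 + 2^(m-1+1))‖ ≤ (1/2:ℝ)^(m-1+3)
    rw [show m-1+1 = m by omega, show m-1+3 = m+1+1 by omega]
    have he : x - (1 + 2^m) = (x - 1) - 2^m := by ring
    rwa [he]
  · refine ⟨m-1, by omega, Or.inr ?_⟩
    show ‖x - (1 + 2^(m-1+1) + 2^(m-1+2))‖ ≤ (1/2:ℝ)^(m-1+3)
    rw [show m-1+1 = m by omega, show m-1+2 = m+1 by omega, show m-1+3 = m+1+1 by omega]
    have he : x - (1 + 2^m + 2^(m+1)) = (x - 1) - 2^m - 2^(m+1) := by ring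
    rwa [he]

lemma normA {x : ℚ_[2]} {n : ℕ} (h : x ∈ A n) : ‖x‖ = (1/2:ℝ)^(2*n) := by
  have hs : x = 2^(2*n) + (x - 2^(2*n)) := by ring
  rw [hs, norm_add_eq_left, norm_two_pow]
  rw [norm_two_pow]
  exact lt_of_le_of_lt h (half_lt (by omega))

lemma centerA' {x : ℚ_[2]} {n : ℕ} (h : x ∈ A' n) :
    ‖x - 2^(2*n)‖ = (1/2:ℝ)^(2*n+2) := by
  have hs : x - 2^(2*n) = 2^(2*n+2) + (x - (2^(2*n) + 2^(2*n+2))) := by ring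
  rw [hs, norm_add_eq_left, norm_two_pow]
  rw [norm_two_pow]
  exact lt_of_le_of_lt h (half_lt (by omega))

lemma normA' {x : ℚ_[2]} {n : ℕ} (h : x ∈ A' n) : ‖x‖ = (1/2:ℝ)^(2*n) := by
  have hc := centerA' h
  have hs : x = 2^(2*n) + (x - 2^(2*n)) := by ring
  rw [hs, norm_add_eq_left, norm_two_pow]
  rw [norm_two_pow, hc]
  exact half_lt (by omega)

lemma normB {x : ℚ_[2]} {n : ℕ} (h : x ∈ B n) : ‖x - 1‖ = (1/2:ℝ)^(n+1) := by
  have hs : x - 1 = 2^(n+1) + (x - (1 + 2^(n+1))) := by ring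
  rw [hs, norm_add_eq_left, norm_two_pow]
  rw [norm_two_pow]
  exact lt_of_le_of_lt h (half_lt (by omega))

lemma centerB' {x : ℚ_[2]} {n : ℕ} (h : x ∈ B' n) :
    ‖x - (1 + 2^(n+1))‖ = (1/2:ℝ)^(n+2) := by
  have hs : x - (1 + 2^(n+1)) = 2^(n+2) + (x - (1 + 2^(n+1) + 2^(n+2))) := by ring
  rw [hs, norm_add_eq_left, norm_two_pow]
  rw [norm_two_pow]
  exact lt_of_le_of_lt h (half_lt (by omega))

lemma normB' {x : ℚ_[2]} {n : ℕ} (h : x ∈ B' n) : ‖x - 1‖ = (1/2:ℝ)^(n+1) := by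
  have hc := centerB' h
  have hs : x - 1 = 2^(n+1) + (x - (1 + 2^(n+1))) := by ring
  rw [hs, norm_add_eq_left, norm_two_pow]
  rw [norm_two_pow, hc]
  exact half_lt (by omega)

lemma normB_one {x : ℚ_[2]} {n : ℕ} (hB : ‖x - 1‖ = (1/2:ℝ)^(n+1)) : ‖x‖ = 1 := by
  have hs : x = 1 + (x - 1) := by ring
  rw [hs, norm_add_eq_left, norm_one]
  rw [norm_one, hB]
  calc (1/2:ℝ)^(n+1) < (1/2)^0 := half_lt (by omega)
    _ = 1 := pow_zero _

lemma AB_absurd {x : ℚ_[2]} {n m : ℕ} (hn : 1 ≤ n)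
    (hA : ‖x‖ = (1/2:ℝ)^(2*n)) (hB : ‖x - 1‖ = (1/2:ℝ)^(m+1)) : False := by
  have h1 : ‖x‖ = 1 := normB_one hB
  rw [hA] at h1
  have := half_inj (h1.trans (pow_zero (1/2:ℝ)).symm)
  omega

lemma AA'_absurd {x : ℚ_[2]} {n : ℕ} (h1 : x ∈ A n) (h2 : x ∈ A' n) : False := by
  have hc := centerA' h2
  have h1' : ‖x - 2^(2*n)‖ ≤ (1/2:ℝ)^(2*n+3) := h1
  rw [hc] at h1'
  have := half_le_iff.1 h1'
  omega

lemma BB'_absurd {x : ℚ_[2]} {n : ℕ} (h1 : x ∈ B n) (h2 : x ∈ B' n) : False := by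
  have hc := centerB' h2
  have h1' : ‖x - (1 + 2^(n+1))‖ ≤ (1/2:ℝ)^(n+3) := h1
  rw [hc] at h1'
  have := half_le_iff.1 h1'
  omega

lemma disk_eq {x : ℚ_[2]} {n m : ℕ} (hn : 1 ≤ n) (hm : 1 ≤ m)
    {s t : Set ℚ_[2]} (hs : s = A n ∨ s = A' n ∨ s = B n ∨ s = B' n)
    (ht : t = A m ∨ t = A' m ∨ t = B m ∨ t = B' m)
    (hxs : x ∈ s) (hxt : x ∈ t) : s = t := by
  rcases hs with rfl | rfl | rfl | rfl <;> rcases ht with rfl | rfl | rfl | rfl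
  · obtain rfl : n = m := by have := half_inj ((normA hxs).symm.trans (normA hxt)); omega
    rfl
  · obtain rfl : n = m := by have := half_inj ((normA hxs).symm.trans (normA' hxt)); omega
    exact (AA'_absurd hxs hxt).elim
  · exact (AB_absurd hn (normA hxs) (normB hxt)).elim
  · exact (AB_absurd hn (normA hxs) (normB' hxt)).elim
  · obtain rfl : n = m := by have := half_inj ((normA' hxs).symm.trans (normA hxt)); omega
    exact (AA'_absurd hxt hxs).elim
  · obtain rfl : n = m := by have := half_inj ((normA' hxs).symm.trans (normA' hxt)); omega
    rfl
  · exact (AB_absurd hn (normA' hxs) (normB hxt)).elim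
  · exact (AB_absurd hn (normA' hxs) (normB' hxt)).elim
  · exact (AB_absurd hm (normA hxt) (normB hxs)).elim
  · exact (AB_absurd hm (normA' hxt) (normB hxs)).elim
  · obtain rfl : n = m := by have := half_inj ((normB hxs).symm.trans (normB hxt)); omega
    rfl
  · obtain rfl : n = m := by have := half_inj ((normB hxs).symm.trans (normB' hxt)); omega
    exact (BB'_absurd hxs hxt).elim
  · exact (AB_absurd hm (normA hxt) (normB' hxs)).elim
  · exact (AB_absurd hm (normA' hxt) (normB' hxs)).elim
  · obtain rfl : n = m := by have := half_inj ((normB' hxs).symm.trans (normB hxt)); omega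
    exact (BB'_absurd hxt hxs).elim
  · obtain rfl : n = m := by have := half_inj ((normB' hxs).symm.trans (normB' hxt)); omega
    rfl

lemma zero_not_A {n : ℕ} (hn : 1 ≤ n) : (0:ℚ_[2]) ∉ A n := fun h => by
  have := normA h
  rw [norm_zero] at this
  exact (halfpow_pos _).ne this

lemma zero_not_A' {n : ℕ} (hn : 1 ≤ n) : (0:ℚ_[2]) ∉ A' n := fun h => by
  have := normA' h
  rw [norm_zero] at this
  exact (halfpow_pos _).ne this

lemma zero_not_B {n : ℕ} (hn : 1 ≤ n) : (0:ℚ_[2]) ∉ B n := fun h => by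
  have := normB h
  rw [zero_sub, norm_neg, norm_one] at this
  have := half_inj ((pow_zero (1/2:ℝ)).trans this)
  omega

lemma zero_not_B' {n : ℕ} (hn : 1 ≤ n) : (0:ℚ_[2]) ∉ B' n := fun h => by
  have := normB' h
  rw [zero_sub, norm_neg, norm_one] at this
  have := half_inj ((pow_zero (1/2:ℝ)).trans this)
  omega

lemma one_not_A {n : ℕ} (hn : 1 ≤ n) : (1:ℚ_[2]) ∉ A n := fun h => by
  have := normA h
  rw [norm_one] at this
  have := half_inj ((pow_zero (1/2:ℝ)).trans this)
  omega

lemma one_not_A' {n : ℕ} (hn : 1 ≤ n) : (1:ℚ_[2]) ∉ A' n := fun h => by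
  have := normA' h
  rw [norm_one] at this
  have := half_inj ((pow_zero (1/2:ℝ)).trans this)
  omega

lemma one_not_B {n : ℕ} (hn : 1 ≤ n) : (1:ℚ_[2]) ∉ B n := fun h => by
  have := normB h
  rw [sub_self, norm_zero] at this
  exact (halfpow_pos (n+1)).ne this

lemma one_not_B' {n : ℕ} (hn : 1 ≤ n) : (1:ℚ_[2]) ∉ B' n := fun h => by
  have := normB' h
  rw [sub_self, norm_zero] at this
  exact (halfpow_pos (n+1)).ne this

lemma part3 {x : ℚ_[2]} (hx : x ∈ J) (h0 : x ≠ 0) (h1 : x ≠ 1) :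
    ∃! s : Set ℚ_[2],
      (∃ n : ℕ, 1 ≤ n ∧ (s = A n ∨ s = A' n ∨ s = B n ∨ s = B' n)) ∧ x ∈ s := by
  have hex : ∃ s : Set ℚ_[2], ∃ n, 1 ≤ n ∧
      (s = A n ∨ s = A' n ∨ s = B n ∨ s = B' n) ∧ x ∈ s := by
    rcases mem_J_self hx with h | h
    · obtain ⟨n, hn, h' | h'⟩ := memA_or_A' hx h0 h
      exacts [⟨A n, n, hn, Or.inl rfl, h'⟩, ⟨A' n, n, hn, Or.inr (Or.inl rfl), h'⟩]
    · obtain ⟨n, hn, h' | h'⟩ := memB_or_B' h1 h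
      exacts [⟨B n, n, hn, Or.inr (Or.inr (Or.inl rfl)), h'⟩,
        ⟨B' n, n, hn, Or.inr (Or.inr (Or.inr rfl)), h'⟩]
  obtain ⟨s, n, hn, hsd, hxs⟩ := hex
  refine ⟨s, ⟨⟨n, hn, hsd⟩, hxs⟩, ?_⟩
  rintro t ⟨⟨m, hm, htd⟩, hxt⟩
  exact disk_eq hm hn htd hsd hxt hxs

/-- `0, 1 ∈ J`; every `x ∈ J` with `x ≠ 0, x ≠ 1` belongs to exactly one of the disks
`A_n, A'_n, B_n, B'_n` (`n ≥ 1`); consequently every point of `J` belongs to exactly one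
element of the alphabet `𝒜`, i.e. `𝒜` is a partition of `J`. -/
theorem stmt16 :
    (0 : ℚ_[2]) ∈ J ∧ (1 : ℚ_[2]) ∈ J ∧
    (∀ x ∈ J, x ≠ 0 → x ≠ 1 →
      ∃! s : Set ℚ_[2],
        (∃ n : ℕ, 1 ≤ n ∧ (s = A n ∨ s = A' n ∨ s = B n ∨ s = B' n)) ∧ x ∈ s) ∧
    (∀ x ∈ J, ∃! s : Set ℚ_[2], s ∈ alphabet ∧ x ∈ s) := by
  refine ⟨zero_mem_J, one_mem_J, fun x hx h0 h1 => part3 hx h0 h1, ?_⟩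
  intro x hx
  by_cases h0 : x = 0
  · subst h0
    refine ⟨{0}, ⟨Or.inl rfl, rfl⟩, ?_⟩
    rintro t ⟨rfl | rfl | ⟨n, hn, rfl | rfl | rfl | rfl⟩, hxt⟩
    · rfl
    · simp at hxt
    · exact (zero_not_A hn hxt.1).elim
    · exact (zero_not_A' hn hxt.1).elim
    · exact (zero_not_B hn hxt.1).elim
    · exact (zero_not_B' hn hxt.1).elim
  by_cases h1 : x = 1
  · subst h1
    refine ⟨{1}, ⟨Or.inr (Or.inl rfl), rfl⟩, ?_⟩
    rintro t ⟨rfl | rfl | ⟨n, hn, rfl | rfl | rfl | rfl⟩, hxt⟩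
    · simp at hxt
    · rfl
    · exact (one_not_A hn hxt.1).elim
    · exact (one_not_A' hn hxt.1).elim
    · exact (one_not_B hn hxt.1).elim
    · exact (one_not_B' hn hxt.1).elim
  · obtain ⟨s, ⟨⟨n, hn, hsd⟩, hxs⟩, huniq⟩ := part3 hx h0 h1
    have htag : s ∩ J ∈ alphabet := by
      refine Or.inr (Or.inr ⟨n, hn, ?_⟩)
      rcases hsd with rfl | rfl | rfl | rfl
      exacts [Or.inl rfl, Or.inr (Or.inl rfl), Or.inr (Or.inr (Or.inl rfl)),
        Or.inr (Or.inr (Or.inr rfl))]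
    refine ⟨s ∩ J, ⟨htag, hxs, hx⟩, ?_⟩
    rintro t ⟨rfl | rfl | ⟨m, hm, rfl | rfl | rfl | rfl⟩, hxt⟩
    · exact absurd hxt h0
    · exact absurd hxt h1
    · rw [huniq (A m) ⟨⟨m, hm, Or.inl rfl⟩, hxt.1⟩]
    · rw [huniq (A' m) ⟨⟨m, hm, Or.inr (Or.inl rfl)⟩, hxt.1⟩]
    · rw [huniq (B m) ⟨⟨m, hm, Or.inr (Or.inr (Or.inl rfl))⟩, hxt.1⟩]
    · rw [huniq (B' m) ⟨⟨m, hm, Or.inr (Or.inr (Or.inr rfl))⟩, hxt.1⟩]
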